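/- (Degree-3 intercommunication) If (A,u,v) ∈ ℛ with d_u(A) = 3, then for each neighbor u' of u one has (A,u,v) ↔ (A ∖ uu', u', v). -/

import Mathlib

attribute [local instance] Classical.propDecidable

namespace FPL

/-- Vertices of the brick-wall honeycomb lattice with periodic boundary conditions. -/
abbrev Vtx (m n : ℕ) := ZMod m × ZMod n

/-- Adjacency on the brick-wall honeycomb lattice: horizontal edges between `(i,j)` and
`(i+1,j)`, and vertical edges between `(i,j)` and `(i,j+1)` whenever `i+j` is even. -/
def HoneyAdj (m n : ℕ) (x y : Vtx m n) : Prop :=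
  (x.2 = y.2 ∧ (y.1 = x.1 + 1 ∨ x.1 = y.1 + 1)) ∨
  (x.1 = y.1 ∧ ((y.2 = x.2 + 1 ∧ Even (x.1.val + x.2.val)) ∨
                (x.2 = y.2 + 1 ∧ Even (y.1.val + y.2.val))))

variable (m n : ℕ) [NeZero m] [NeZero n]

/-- The edge set of the brick-wall honeycomb lattice. -/
noncomputable def honeyEdges : Finset (Sym2 (Vtx m n)) :=
  Finset.image (fun p : Vtx m n × Vtx m n => s(p.1, p.2))
    (Finset.univ.filter fun p => HoneyAdj m n p.1 p.2)

/-- `bdeg m n A x` is the degree of the vertex `x` in the spanning subgraph `(V, A)`. -/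
noncomputable def bdeg (A : Finset (Sym2 (Vtx m n))) (x : Vtx m n) : ℕ :=
  (A.filter fun e => x ∈ e).card

/-- `(A,u,v)` is a state of the worm chain: `A ⊆ E`, and the set of odd-degree vertices of
`(V,A)` is `{u,v}` if `u ≠ v`, and is empty if `u = v`. -/
def IsWormState (A : Finset (Sym2 (Vtx m n))) (u v : Vtx m n) : Prop :=
  A ⊆ honeyEdges m n ∧ ∀ x, (Odd (bdeg m n A x) ↔ ((x = u ∨ x = v) ∧ u ≠ v))

/-- The worm state space `𝒮`. -/
abbrev WormState := {p : Finset (Sym2 (Vtx m n)) × Vtx m n × Vtx m n //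
  IsWormState m n p.1 p.2.1 p.2.2}

/-- The set `ℛ` of states with no isolated vertices. -/
def FullSupport (st : WormState m n) : Prop := ∀ x : Vtx m n, bdeg m n st.1.1 x ≠ 0

/-- The fully-packed worm transition matrix `P'_∞`. -/
noncomputable def Pinf : Matrix (WormState m n) (WormState m n) ℝ := fun st tt =>
  if st.1.2.1 = st.1.2.2 then
    (if tt = st then (bdeg m n st.1.1 st.1.2.2 : ℝ) / 3 else 0) +
    (if ∃ v' : Vtx m n, HoneyAdj m n st.1.2.2 v' ∧ s(st.1.2.2, v') ∉ st.1.1 ∧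
        tt.1.1 = insert s(st.1.2.2, v') st.1.1 ∧
        ((tt.1.2.1 = v' ∧ tt.1.2.2 = st.1.2.2) ∨ (tt.1.2.1 = st.1.2.2 ∧ tt.1.2.2 = v'))
      then 1/6 else 0)
  else
    (if bdeg m n st.1.1 st.1.2.1 = 3 ∧ ∃ u' : Vtx m n, HoneyAdj m n st.1.2.1 u' ∧
        s(st.1.2.1, u') ∈ st.1.1 ∧ tt.1.1 = st.1.1.erase s(st.1.2.1, u') ∧
        tt.1.2.1 = u' ∧ tt.1.2.2 = st.1.2.2 then 1/6 else 0) +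
    (if bdeg m n st.1.1 st.1.2.1 = 1 ∧ ∃ u' : Vtx m n, HoneyAdj m n st.1.2.1 u' ∧
        s(st.1.2.1, u') ∉ st.1.1 ∧ tt.1.1 = insert s(st.1.2.1, u') st.1.1 ∧
        tt.1.2.1 = u' ∧ tt.1.2.2 = st.1.2.2 then 1/4 else 0) +
    (if bdeg m n st.1.1 st.1.2.2 = 3 ∧ ∃ v' : Vtx m n, HoneyAdj m n st.1.2.2 v' ∧
        s(st.1.2.2, v') ∈ st.1.1 ∧ tt.1.1 = st.1.1.erase s(st.1.2.2, v') ∧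
        tt.1.2.1 = st.1.2.1 ∧ tt.1.2.2 = v' then 1/6 else 0) +
    (if bdeg m n st.1.1 st.1.2.2 = 1 ∧ ∃ v' : Vtx m n, HoneyAdj m n st.1.2.2 v' ∧
        s(st.1.2.2, v') ∉ st.1.1 ∧ tt.1.1 = insert s(st.1.2.2, v') st.1.1 ∧
        tt.1.2.1 = st.1.2.1 ∧ tt.1.2.2 = v' then 1/4 else 0)

/-- `st → tt`: some power of `P'_∞` has positive `(st,tt)` entry. -/
def Reaches (st tt : WormState m n) : Prop := ∃ k : ℕ, 0 < (Pinf m n ^ k) st tt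

/-- `st ↔ tt`: mutual reachability. -/
def Comm (st tt : WormState m n) : Prop := Reaches m n st tt ∧ Reaches m n tt st

/-- The fully-packed configuration consisting of all horizontal edges. -/
noncomputable def Hconfig : Finset (Sym2 (Vtx m n)) :=
  Finset.image (fun p : Vtx m n => s(p, (p.1 + 1, p.2))) Finset.univ

end FPL

/-!
Lattice vertices have at most three neighbours, so a defect `u` of degree 3 carries every
lattice edge at it and the worm may delete `uu'`, moving the defect to `u'` (probability `1/6`). To come back: if `u' = v` the new
state is closed and the worm re-inserts `u'u` with probability `1/6`; otherwise `u'` was not a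
defect of `A`, so its degree there is even, nonzero by full support and at most 3, i.e. 2.
After the deletion `u'` has degree 1 and the worm re-inserts `u'u` with probability `1/4`.
-/

namespace FPL

variable {m n : ℕ}

lemma even_val_add_one_iff [NeZero n] (hn : Even n) (a : ZMod n) :
    Even (a + 1).val ↔ ¬ Even a.val := by
  have hmod : (a + 1).val % 2 = (a.val + 1) % 2 := by
    rw [ZMod.val_add, ZMod.val_one_eq_one_mod, Nat.mod_mod_of_dvd _ hn.two_dvd, Nat.add_mod,
      Nat.mod_mod_of_dvd _ hn.two_dvd, ← Nat.add_mod]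
  rw [Nat.even_iff, Nat.even_iff, hmod]
  omega

lemma honeyAdj_symm {x y : Vtx m n} (h : HoneyAdj m n x y) : HoneyAdj m n y x := by
  rcases h with ⟨h1, h2 | h2⟩ | ⟨h1, h2 | h2⟩
  · exact Or.inl ⟨h1.symm, Or.inr h2⟩
  · exact Or.inl ⟨h1.symm, Or.inl h2⟩
  · exact Or.inr ⟨h1.symm, Or.inr h2⟩
  · exact Or.inr ⟨h1.symm, Or.inl h2⟩

lemma honeyAdj_irrefl [Nontrivial (ZMod m)] [Nontrivial (ZMod n)] (x : Vtx m n) :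
    ¬ HoneyAdj m n x x := by
  rintro (⟨-, h | h⟩ | ⟨-, ⟨h, -⟩ | ⟨h, -⟩⟩) <;> exact one_ne_zero (left_eq_add.mp h)

def honeyNbrs (x : Vtx m n) : Finset (Vtx m n) :=
  {(x.1 + 1, x.2), (x.1 - 1, x.2),
    (x.1, if Even (x.1.val + x.2.val) then x.2 + 1 else x.2 - 1)}

lemma mem_honeyNbrs_of_honeyAdj [NeZero n] (hn : Even n) {x y : Vtx m n}
    (h : HoneyAdj m n x y) : y ∈ honeyNbrs x := by
  simp only [honeyNbrs, Finset.mem_insert, Finset.mem_singleton]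
  rcases h with ⟨h1, h2 | h2⟩ | ⟨h1, ⟨h2, h3⟩ | ⟨h2, h3⟩⟩
  · exact Or.inl (Prod.ext h2 h1.symm)
  · exact Or.inr (Or.inl (Prod.ext (eq_sub_of_add_eq h2.symm) h1.symm))
  · exact Or.inr (Or.inr (Prod.ext h1.symm (by rw [if_pos h3, h2])))
  · have hodd : ¬ Even (x.1.val + x.2.val) := by
      rw [h1, h2, Nat.even_add, even_val_add_one_iff hn]
      rw [Nat.even_add] at h3
      tauto
    exact Or.inr (Or.inr (Prod.ext h1.symm (by rw [if_neg hodd, h2, add_sub_cancel_right])))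

lemma bdeg_mono {A B : Finset (Sym2 (Vtx m n))} (hAB : A ⊆ B) (x : Vtx m n) :
    bdeg m n A x ≤ bdeg m n B x :=
  Finset.card_le_card (Finset.filter_subset_filter _ hAB)

lemma bdeg_erase_add_one {A : Finset (Sym2 (Vtx m n))} {e : Sym2 (Vtx m n)} (he : e ∈ A)
    {x : Vtx m n} (hx : x ∈ e) : bdeg m n (A.erase e) x + 1 = bdeg m n A x := by
  rw [bdeg, Finset.filter_erase,
    Finset.card_erase_add_one (Finset.mem_filter.mpr ⟨he, hx⟩), bdeg]

lemma bdeg_erase_of_notMem (A : Finset (Sym2 (Vtx m n))) {e : Sym2 (Vtx m n)}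
    {x : Vtx m n} (hx : x ∉ e) : bdeg m n (A.erase e) x = bdeg m n A x := by
  have he : e ∉ A.filter (x ∈ ·) := fun h => hx (Finset.mem_filter.mp h).2
  rw [bdeg, Finset.filter_erase, Finset.erase_eq_of_notMem he, bdeg]

section Degree

variable [NeZero m] [NeZero n]

lemma mem_honeyEdges_of_honeyAdj {x y : Vtx m n} (h : HoneyAdj m n x y) :
    s(x, y) ∈ honeyEdges m n :=
  Finset.mem_image.mpr ⟨(x, y), Finset.mem_filter.mpr ⟨Finset.mem_univ _, h⟩, rfl⟩

lemma bdeg_honeyEdges_le_three (hn : Even n) (x : Vtx m n) :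
    bdeg m n (honeyEdges m n) x ≤ 3 := by
  have hsub : (honeyEdges m n).filter (x ∈ ·) ⊆ (honeyNbrs x).image (fun y => s(x, y)) := by
    intro e he
    obtain ⟨he, hxe⟩ := Finset.mem_filter.mp he
    obtain ⟨⟨a, b⟩, hab, rfl⟩ := Finset.mem_image.mp he
    have hab : HoneyAdj m n a b := (Finset.mem_filter.mp hab).2
    rcases Sym2.mem_iff.mp hxe with rfl | rfl
    · exact Finset.mem_image.mpr ⟨b, mem_honeyNbrs_of_honeyAdj hn hab, rfl⟩
    · exact Finset.mem_image.mpr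
        ⟨a, mem_honeyNbrs_of_honeyAdj hn (honeyAdj_symm hab), Sym2.eq_swap⟩
  calc bdeg m n (honeyEdges m n) x
      ≤ ((honeyNbrs x).image (fun y => s(x, y))).card := Finset.card_le_card hsub
    _ ≤ (honeyNbrs x).card := Finset.card_image_le
    _ ≤ 3 := Finset.card_le_three

lemma bdeg_le_three (hn : Even n) {A : Finset (Sym2 (Vtx m n))} (hA : A ⊆ honeyEdges m n)
    (x : Vtx m n) : bdeg m n A x ≤ 3 :=
  (bdeg_mono hA x).trans (bdeg_honeyEdges_le_three hn x)

lemma mem_of_bdeg_eq_three (hn : Even n) {A : Finset (Sym2 (Vtx m n))}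
    (hA : A ⊆ honeyEdges m n) {u u' : Vtx m n} (hdeg : bdeg m n A u = 3)
    (hadj : HoneyAdj m n u u') : s(u, u') ∈ A := by
  have hsat : A.filter (u ∈ ·) = (honeyEdges m n).filter (u ∈ ·) :=
    Finset.eq_of_subset_of_card_le (Finset.filter_subset_filter _ hA)
      ((bdeg_honeyEdges_le_three hn u).trans hdeg.ge)
  have hmem : s(u, u') ∈ (honeyEdges m n).filter (u ∈ ·) :=
    Finset.mem_filter.mpr ⟨mem_honeyEdges_of_honeyAdj hadj, Sym2.mem_mk_left u u'⟩
  exact (Finset.mem_filter.mp (hsat ▸ hmem)).1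

end Degree

namespace IsWormState

variable [NeZero m] [NeZero n] {A : Finset (Sym2 (Vtx m n))} {u v : Vtx m n}

lemma ne_of_odd_bdeg (h : IsWormState m n A u v) (hu : Odd (bdeg m n A u)) : u ≠ v :=
  ((h.2 u).mp hu).2

lemma erase (h : IsWormState m n A u v) (huv : u ≠ v) {u' : Vtx m n} (huu' : u ≠ u')
    (he : s(u, u') ∈ A) : IsWormState m n (A.erase s(u, u')) u' v := by
  refine ⟨(Finset.erase_subset _ _).trans h.1, fun x => ?_⟩
  by_cases hxu : x = u
  · subst hxu
    have hodd : Odd (bdeg m n A x) := (h.2 x).mpr ⟨Or.inl rfl, huv⟩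
    rw [← bdeg_erase_add_one he (Sym2.mem_mk_left _ _), Nat.odd_add_one] at hodd
    simp only [hodd, false_iff, not_and, not_not]
    rintro (rfl | rfl) <;> contradiction
  by_cases hxu' : x = u'
  · subst hxu'
    have hx := h.2 x
    rw [← bdeg_erase_add_one he (Sym2.mem_mk_right _ _), Nat.odd_add_one] at hx
    simp only [hxu, false_or, true_or, true_and] at hx ⊢
    tauto
  · rw [bdeg_erase_of_notMem A (by simp [Sym2.mem_iff, hxu, hxu']), h.2 x]
    simp only [hxu, hxu', false_or]
    constructor
    · rintro ⟨rfl, -⟩; exact ⟨rfl, Ne.symm hxu'⟩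
    · rintro ⟨rfl, -⟩; exact ⟨rfl, Ne.symm hxu⟩

lemma bdeg_eq_two (h : IsWormState m n A u v) (hn : Even n) {x : Vtx m n} (hxu : x ≠ u)
    (hxv : x ≠ v) (hx : bdeg m n A x ≠ 0) : bdeg m n A x = 2 := by
  have heven : ¬ Odd (bdeg m n A x) := by
    rw [h.2 x]; rintro ⟨hx | hx, -⟩ <;> contradiction
  have hle := bdeg_le_three hn h.1 x
  rw [Nat.not_odd_iff_even, Nat.even_iff] at heven
  omega

end IsWormState

section Transitions

variable [NeZero m] [NeZero n]

lemma reaches_of_pinf_pos {s t : WormState m n} (h : 0 < Pinf m n s t) : Reaches m n s t :=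
  ⟨1, by rwa [pow_one]⟩

lemma pinf_pos_erase_first {A : Finset (Sym2 (Vtx m n))} {u v u' : Vtx m n}
    (hs : IsWormState m n A u v) (ht : IsWormState m n (A.erase s(u, u')) u' v) (huv : u ≠ v)
    (hdeg : bdeg m n A u = 3) (hadj : HoneyAdj m n u u') (he : s(u, u') ∈ A) :
    0 < Pinf m n ⟨(A, u, v), hs⟩ ⟨(A.erase s(u, u'), u', v), ht⟩ := by
  unfold Pinf
  rw [if_neg huv, if_pos ⟨hdeg, u', hadj, he, rfl, rfl, rfl⟩]
  positivity

lemma pinf_pos_insert_of_closed {A B : Finset (Sym2 (Vtx m n))} {v w : Vtx m n}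
    (hs : IsWormState m n A v v) (ht : IsWormState m n B w v) (hadj : HoneyAdj m n v w)
    (he : s(v, w) ∉ A) (hB : B = insert s(v, w) A) :
    0 < Pinf m n ⟨(A, v, v), hs⟩ ⟨(B, w, v), ht⟩ := by
  unfold Pinf
  rw [if_pos rfl]
  refine add_pos_of_nonneg_of_pos (by positivity) ?_
  rw [if_pos ⟨w, hadj, he, hB, Or.inl ⟨rfl, rfl⟩⟩]
  positivity

lemma pinf_pos_insert_first {A B : Finset (Sym2 (Vtx m n))} {u v w : Vtx m n}
    (hs : IsWormState m n A u v) (ht : IsWormState m n B w v) (huv : u ≠ v)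
    (hdeg : bdeg m n A u = 1) (hadj : HoneyAdj m n u w) (he : s(u, w) ∉ A)
    (hB : B = insert s(u, w) A) :
    0 < Pinf m n ⟨(A, u, v), hs⟩ ⟨(B, w, v), ht⟩ := by
  unfold Pinf
  rw [if_neg huv, if_neg fun h => absurd (hdeg.symm.trans h.1) (by decide),
    if_pos ⟨hdeg, w, hadj, he, hB, rfl, rfl⟩]
  positivity

end Transitions

theorem degree_three_intercomm_general (m n : ℕ) [NeZero m] [NeZero n]
    (hn : Even n) (hm4 : 4 ≤ m)
    (st : WormState m n) (hR : FullSupport m n st)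
    (hdeg : bdeg m n st.1.1 st.1.2.1 = 3)
    (u' : Vtx m n) (hadj : HoneyAdj m n st.1.2.1 u') :
    ∃ t1 : WormState m n,
      t1.1 = (st.1.1.erase s(st.1.2.1, u'), u', st.1.2.2) ∧ Comm m n st t1 := by
  obtain ⟨⟨A, u, v⟩, hs⟩ := st
  dsimp only at hdeg hadj ⊢
  have : Fact (1 < m) := ⟨by omega⟩
  have : Fact (1 < n) := ⟨by have := NeZero.ne n; obtain ⟨k, rfl⟩ := hn; omega⟩
  have huv : u ≠ v := hs.ne_of_odd_bdeg (by rw [hdeg]; decide)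
  have huu' : u ≠ u' := by rintro rfl; exact honeyAdj_irrefl u hadj
  have he : s(u, u') ∈ A := mem_of_bdeg_eq_three hn hs.1 hdeg hadj
  have ht := hs.erase huv huu' he
  have hA : A = insert s(u', u) (A.erase s(u, u')) := by rw [Sym2.eq_swap, Finset.insert_erase he]
  have hnot : s(u', u) ∉ A.erase s(u, u') := by rw [Sym2.eq_swap]; exact Finset.notMem_erase _ _
  refine ⟨⟨_, ht⟩, rfl, reaches_of_pinf_pos (pinf_pos_erase_first hs ht huv hdeg hadj he),
    reaches_of_pinf_pos ?_⟩
  by_cases hu'v : u' = v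
  · subst hu'v
    exact pinf_pos_insert_of_closed ht hs (honeyAdj_symm hadj) hnot hA
  · have hdeg' : bdeg m n (A.erase s(u, u')) u' = 1 := by
      have h2 : bdeg m n A u' = 2 := hs.bdeg_eq_two hn (Ne.symm huu') hu'v (hR u')
      have h1 := bdeg_erase_add_one he (Sym2.mem_mk_right u u')
      omega
    exact pinf_pos_insert_first ht hs hu'v hdeg' (honeyAdj_symm hadj) hnot hA

theorem degree_three_intercomm (m n : ℕ) [NeZero m] [NeZero n]
    (hm : Even m) (hn : Even n) (hm4 : 4 ≤ m) (hn4 : 4 ≤ n)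
    (st : WormState m n) (hR : FullSupport m n st)
    (hdeg : bdeg m n st.1.1 st.1.2.1 = 3)
    (u' : Vtx m n) (hadj : HoneyAdj m n st.1.2.1 u') :
    ∃ t1 : WormState m n,
      t1.1 = (st.1.1.erase s(st.1.2.1, u'), u', st.1.2.2) ∧ Comm m n st t1 :=
  degree_three_intercomm_general m n hn hm4 st hR hdeg u' hadj

end FPL
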